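/- arXiv:2110.02538 — 3 statements merged into one kernel-verified Lean document; each statement's English description precedes it below -/
import Mathlib

section
/- Let S and S̃ be n×n real matrices, let ρ, ψ be real numbers with ρ ≠ 0 and |ψ|·‖S̃‖ < 1 (operator norm). Suppose the vector p ∈ ℝⁿ satisfies the fixed-point equation p = ρ·y + ψ·S·p for some y ∈ ℝⁿ, and define the residual r = ψ·(S̃ − S)·p. Then pr_{ρ,ψ}^{S̃}(y) = p + (1/ρ)·pr_{ρ,ψ}^{S̃}(r), where pr_{ρ,ψ}^{S̃}(x) denotes the generalized PageRank vector ρ·Σ_{t=0}^∞ ψᵗ·S̃ᵗ·x. -/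
set_option synthInstance.maxHeartbeats 1000000
set_option maxHeartbeats 1000000

section Aux

variable {E : Type*} [NormedAddCommGroup E] [NormedSpace ℝ E] [CompleteSpace E]

lemma geomSeries_apply_tsum (T : E →L[ℝ] E) (h : ‖T‖ < 1) (x : E) :
    (∑' i : ℕ, T ^ i) x = ∑' i : ℕ, (T ^ i) x := by
  have hs : Summable fun i : ℕ => T ^ i := summable_geometric_of_norm_lt_one h
  exact ((ContinuousLinearMap.apply ℝ E x).hasSum hs.hasSum).tsum_eq.symm

lemma geomSeries_one_sub_apply (T : E →L[ℝ] E) (h : ‖T‖ < 1) (v : E) :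
    (∑' i : ℕ, T ^ i) ((1 - T) v) = v := by
  have hgm := geom_series_mul_neg T h
  calc (∑' i : ℕ, T ^ i) ((1 - T) v) = ((∑' i : ℕ, T ^ i) * (1 - T)) v := rfl
  _ = v := by rw [hgm]; rfl

lemma one_sub_geomSeries_apply (T : E →L[ℝ] E) (h : ‖T‖ < 1) (v : E) :
    (1 - T) ((∑' i : ℕ, T ^ i) v) = v := by
  have hgm := mul_neg_geom_series T h
  calc (1 - T) ((∑' i : ℕ, T ^ i) v) = ((1 - T) * (∑' i : ℕ, T ^ i)) v := rfl
  _ = v := by rw [hgm]; rfl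

/-- Fixed point equation for the Neumann series. -/
lemma neumann_fixed (T : E →L[ℝ] E) (h : ‖T‖ < 1) (x : E) :
    (∑' i : ℕ, T ^ i) x = x + T ((∑' i : ℕ, T ^ i) x) := by
  have h1 := one_sub_geomSeries_apply T h x
  have h2 : (∑' i : ℕ, T ^ i) x - T ((∑' i : ℕ, T ^ i) x) = x := by
    simpa [ContinuousLinearMap.sub_apply] using h1
  exact sub_eq_iff_eq_add.mp h2

/-- Uniqueness of fixed points of contractions (via Neumann series). -/
lemma fixed_unique (T : E →L[ℝ] E) (h : ‖T‖ < 1) (x v₁ v₂ : E)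
    (h₁ : v₁ = x + T v₁) (h₂ : v₂ = x + T v₂) : v₁ = v₂ := by
  have e : ∀ v : E, v = x + T v → (1 - T) v = x := by
    intro v hv
    have h2 : v - T v = x := sub_eq_iff_eq_add.mpr hv
    simpa [ContinuousLinearMap.sub_apply] using h2
  have := (geomSeries_one_sub_apply T h v₁).symm.trans
    (by rw [e v₁ h₁, ← e v₂ h₂, geomSeries_one_sub_apply T h v₂])
  exact this

end Aux

/-- The generalized PageRank map `pr_{ρ,ψ}^{A}(x) = ρ·Σ_{t=0}^∞ ψᵗ·Aᵗ·x`,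
where the matrix `A` acts on `EuclideanSpace ℝ (Fin n)`. -/
noncomputable def genPR {n : ℕ} (A : Matrix (Fin n) (Fin n) ℝ) (ρ ψ : ℝ)
    (x : EuclideanSpace ℝ (Fin n)) : EuclideanSpace ℝ (Fin n) :=
  ρ • ∑' t : ℕ, ψ ^ t • ((Matrix.toEuclideanCLM (𝕜 := ℝ) A) ^ t) x

lemma smul_pow_toEuclideanCLM {n : ℕ} (A : Matrix (Fin n) (Fin n) ℝ) (ψ : ℝ) (t : ℕ) :
    (ψ • (Matrix.toEuclideanCLM (𝕜 := ℝ) A)) ^ t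
      = ψ ^ t • (Matrix.toEuclideanCLM (𝕜 := ℝ) A) ^ t := by
  set M := Matrix.toEuclideanCLM (𝕜 := ℝ) A
  induction t with
  | zero => simp
  | succ k ih =>
    refine ContinuousLinearMap.ext fun x => ?_
    have e1 : ((ψ • M) ^ (k + 1)) x = ((ψ • M) ^ k) ((ψ • M) x) := by
      rw [pow_succ]; rfl
    have e3 : (ψ ^ (k + 1) • M ^ (k + 1)) x = ψ ^ (k + 1) • (M ^ k) (M x) := by
      rw [pow_succ]; rfl
    rw [e1, e3, ih, ContinuousLinearMap.smul_apply, ContinuousLinearMap.smul_apply,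
      map_smul, smul_smul, ← pow_succ]

lemma genPR_eq {n : ℕ} (A : Matrix (Fin n) (Fin n) ℝ) (ρ ψ : ℝ)
    (hc : ‖ψ • (Matrix.toEuclideanCLM (𝕜 := ℝ) A)‖ < 1)
    (x : EuclideanSpace ℝ (Fin n)) :
    genPR A ρ ψ x
      = ρ • (∑' t : ℕ, (ψ • (Matrix.toEuclideanCLM (𝕜 := ℝ) A)) ^ t) x := by
  unfold genPR
  have h : ∀ t : ℕ, (ψ • (Matrix.toEuclideanCLM (𝕜 := ℝ) A)) ^ t
      = ψ ^ t • (Matrix.toEuclideanCLM (𝕜 := ℝ) A) ^ t := fun t =>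
    smul_pow_toEuclideanCLM A ψ t
  rw [geomSeries_apply_tsum _ hc]
  congr 1
  exact tsum_congr fun t => by rw [h t]; rfl

/-- the updating equation
`pr_{ρ,ψ}^{S̃}(y) = p + (1/ρ)·pr_{ρ,ψ}^{S̃}(r)` with `r = ψ·(S̃ − S)·p`,
whenever `p` satisfies the fixed-point equation `p = ρ·y + ψ·S·p`. -/
theorem stmt0 {n : ℕ} (S St : Matrix (Fin n) (Fin n) ℝ) (ρ ψ : ℝ)
    (hρ : ρ ≠ 0)
    (hψ : |ψ| * ‖Matrix.toEuclideanCLM (𝕜 := ℝ) St‖ < 1)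
    (y p : EuclideanSpace ℝ (Fin n))
    (hp : p = ρ • y + ψ • (Matrix.toEuclideanCLM (𝕜 := ℝ) S) p)
    (r : EuclideanSpace ℝ (Fin n))
    (hr : r = ψ • (Matrix.toEuclideanCLM (𝕜 := ℝ) (St - S)) p) :
    genPR St ρ ψ y = p + ρ⁻¹ • genPR St ρ ψ r := by
  set T : EuclideanSpace ℝ (Fin n) →L[ℝ] EuclideanSpace ℝ (Fin n) :=
    ψ • (Matrix.toEuclideanCLM (𝕜 := ℝ) St) with hT
  have hTn : ‖T‖ < 1 := by
    rw [hT]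
    have hle := norm_smul_le
      (β := EuclideanSpace ℝ (Fin n) →L[ℝ] EuclideanSpace ℝ (Fin n)) ψ
      (Matrix.toEuclideanCLM (𝕜 := ℝ) St)
    rw [Real.norm_eq_abs] at hle
    exact lt_of_le_of_lt hle hψ
  set G : EuclideanSpace ℝ (Fin n) →L[ℝ] EuclideanSpace ℝ (Fin n) :=
    ∑' i : ℕ, T ^ i with hG
  have hgy : genPR St ρ ψ y = ρ • G y := genPR_eq St ρ ψ hTn y
  have hgr : genPR St ρ ψ r = ρ • G r := genPR_eq St ρ ψ hTn r
  -- both sides solve v = ρ•y + T v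
  have hu : ρ • G y = ρ • y + T (ρ • G y) := by
    rw [map_smul, ← smul_add, ← neumann_fixed T hTn y]
  have hw : ρ • G r = ρ • r + T (ρ • G r) := by
    rw [map_smul, ← smul_add, ← neumann_fixed T hTn r]
  have hq : p + ρ⁻¹ • (ρ • G r) = ρ • y + T (p + ρ⁻¹ • (ρ • G r)) := by
    have h1 : ρ • y + T p = p + r := by
      have : T p = ψ • (Matrix.toEuclideanCLM (𝕜 := ℝ) S) p + r := by
        rw [hr, hT]
        simp [map_sub, smul_sub, ContinuousLinearMap.smul_apply,
          ContinuousLinearMap.sub_apply]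
      rw [this, ← add_assoc, ← hp]
    have h2 : ρ⁻¹ • T (ρ • G r) = ρ⁻¹ • (ρ • G r) - r := by
      have h3 : T (ρ • G r) = ρ • G r - ρ • r := eq_sub_iff_add_eq'.mpr hw.symm
      rw [h3, smul_sub]
      congr 1
      rw [smul_smul, inv_mul_cancel₀ hρ, one_smul]
    rw [map_add, map_smul, h2, ← add_assoc, h1]
    abel
  rw [hgy, hgr]
  exact fixed_unique T hTn (ρ • y) _ _ hu hq
end

section
/- Let S and S̃ be n×n real matrices, ρ, ψ ∈ ℝ, and y ∈ ℝⁿ. Suppose p ∈ ℝⁿ satisfies p = ρ·y + ψ·S·p, and define r = ψ·(S̃ − S)·p. Define the iteration p̃⁽⁰⁾ = p and p̃⁽ᵗ⁾ = ρ·y + ψ·S̃·p̃⁽ᵗ⁻¹⁾ for t ≥ 1. Then for every t ≥ 1, p̃⁽ᵗ⁾ = p + Σ_{k=0}^{t−1} ψᵏ·S̃ᵏ·r. -/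
/-- the warm-restarted iteration `p̃⁽⁰⁾ = p`,
`p̃⁽ᵗ⁾ = ρ·y + ψ·S̃·p̃⁽ᵗ⁻¹⁾` satisfies, for every `t ≥ 1`,
`p̃⁽ᵗ⁾ = p + Σ_{k=0}^{t−1} ψᵏ·S̃ᵏ·r` where `r = ψ·(S̃ − S)·p`. -/
theorem stmt1 {n : ℕ} (S St : Matrix (Fin n) (Fin n) ℝ) (ρ ψ : ℝ)
    (y p : Fin n → ℝ) (hp : p = ρ • y + ψ • S.mulVec p)
    (r : Fin n → ℝ) (hr : r = ψ • (St - S).mulVec p)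
    (pt : ℕ → (Fin n → ℝ))
    (h0 : pt 0 = p)
    (hrec : ∀ t : ℕ, pt (t + 1) = ρ • y + ψ • St.mulVec (pt t)) :
    ∀ t : ℕ, 1 ≤ t → pt t = p + ∑ k ∈ Finset.range t, ψ ^ k • (St ^ k).mulVec r := by
  have base : pt 1 = p + r := by
    rw [hrec 0, h0, hr, Matrix.sub_mulVec]
    nth_rewrite 2 [hp]
    rw [smul_sub]
    abel
  intro t ht
  induction t with
  | zero => omega
  | succ t ih =>
    rcases Nat.eq_or_lt_of_le ht with h | h
    · obtain rfl : t = 0 := by omega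
      simp only [zero_add, Finset.sum_range_one, pow_zero, one_smul, Matrix.one_mulVec]
      exact base
    · have ht' : 1 ≤ t := by omega
      have ihe := ih ht'
      rw [hrec t, ihe, Matrix.mulVec_add, smul_add]
      have hP : ρ • y + ψ • St.mulVec p = p + r := by rw [← base, hrec 0, h0]
      have hsum : ψ • St.mulVec (∑ k ∈ Finset.range t, ψ ^ k • (St ^ k).mulVec r)
          = ∑ k ∈ Finset.range t, ψ ^ (k + 1) • (St ^ (k + 1)).mulVec r := by
        have : St.mulVec (∑ k ∈ Finset.range t, ψ ^ k • (St ^ k).mulVec r)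
            = ∑ k ∈ Finset.range t, St.mulVec (ψ ^ k • (St ^ k).mulVec r) := by
          exact map_sum St.mulVecLin (fun k => ψ ^ k • (St ^ k).mulVec r) (Finset.range t)
        rw [this, Finset.smul_sum]
        refine Finset.sum_congr rfl fun k _ => ?_
        rw [Matrix.mulVec_smul, smul_smul, Matrix.mulVec_mulVec, ← pow_succ', ← pow_succ']
      calc ρ • y + (ψ • St.mulVec p + ψ • St.mulVec (∑ k ∈ Finset.range t, ψ ^ k • (St ^ k).mulVec r))
          = (ρ • y + ψ • St.mulVec p) + ∑ k ∈ Finset.range t, ψ ^ (k + 1) • (St ^ (k + 1)).mulVec r := by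
            rw [hsum]; abel
        _ = p + (r + ∑ k ∈ Finset.range t, ψ ^ (k + 1) • (St ^ (k + 1)).mulVec r) := by
            rw [hP]; abel
        _ = p + ∑ k ∈ Finset.range (t + 1), ψ ^ k • (St ^ k).mulVec r := by
            rw [Finset.sum_range_succ']
            simp [add_comm]
end

section
/- Let S and S̃ be n×n real matrices and ρ, ψ ∈ ℝ with ρ ≠ 0 and |ψ|·‖S̃‖ < 1 (operator norm). Suppose p ∈ ℝⁿ satisfies p = ρ·y + ψ·S·p, let r = ψ·(S̃ − S)·p, and define the warm-restarted iterates p̃⁽⁰⁾ = p, p̃⁽ᵗ⁾ = ρ·y + ψ·S̃·p̃⁽ᵗ⁻¹⁾. Then for every t ≥ 0, ‖p̃⁽ᵗ⁾ − p*‖ ≤ (|ψ|·‖S̃‖)ᵗ·‖r‖ / (1 − |ψ|·‖S̃‖), where p* = ρ·(I − ψ·S̃)⁻¹·y is the evolved generalized PageRank vector. -/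
/-! The map `f v = ρ • y + ψ • S̃ v` is a contraction with constant `c = ‖ψ • S̃‖ = |ψ| ‖S̃‖`,
`p*` is its fixed point, and `p̃⁽ᵗ⁾ = fᵗ p`. Hence `‖p̃⁽ᵗ⁾ − p*‖ ≤ cᵗ ‖p − p*‖`, and the a posteriori
estimate `‖p − p*‖ ≤ ‖f p − p‖ / (1 − c)` concludes, because the equation `p = ρ • y + ψ • S p`
makes the one-step residual `f p − p` equal to `r`. -/

open Function

theorem ContinuousLinearMap.lipschitzWith_const_add {𝕜 E : Type*} [NontriviallyNormedField 𝕜]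
    [SeminormedAddCommGroup E] [NormedSpace 𝕜 E] (b : E) (L : E →L[𝕜] E) :
    LipschitzWith ‖L‖₊ (fun v => b + L v) :=
  LipschitzWith.of_dist_le_mul fun x z => by
    rw [dist_add_left]
    exact L.lipschitz.dist_le_mul x z

theorem ContractingWith.dist_iterate_le_of_isFixedPt {α : Type*} [MetricSpace α] {K : NNReal}
    {f : α → α} (hf : ContractingWith K f) {y : α} (hy : IsFixedPt f y) (x : α) (n : ℕ) :
    dist (f^[n] x) y ≤ (K : ℝ) ^ n * dist x (f x) / (1 - K) := by
  calc dist (f^[n] x) y = dist (f^[n] x) (f^[n] y) := by rw [(hy.iterate n).eq]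
    _ ≤ K ^ n * dist x y := by exact_mod_cast hf.2.iterate n |>.dist_le_mul x y
    _ ≤ K ^ n * (dist x (f x) / (1 - K)) := by gcongr; exact hf.dist_le_of_fixedPoint x hy
    _ = _ := by ring

namespace Matrix

variable {𝕜 n : Type*} [RCLike 𝕜] [Fintype n] [DecidableEq n]

theorem isUnit_one_sub_of_norm_toEuclideanCLM_lt_one {A : Matrix n n 𝕜}
    (hA : ‖toEuclideanCLM (𝕜 := 𝕜) A‖ < 1) : IsUnit (1 - A) := by
  have := (isUnit_one_sub_of_norm_lt_one hA).map (toEuclideanCLM (𝕜 := 𝕜) (n := n)).symm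
  simpa using this

theorem isFixedPt_smul_toEuclideanCLM_inv_one_sub {A : Matrix n n 𝕜} (hA : IsUnit (1 - A))
    (c : 𝕜) (b : EuclideanSpace 𝕜 n) :
    IsFixedPt (fun v => c • b + toEuclideanCLM (𝕜 := 𝕜) A v)
      (c • toEuclideanCLM (𝕜 := 𝕜) (1 - A)⁻¹ b) := by
  have hinv : toEuclideanCLM (𝕜 := 𝕜) (1 - A) (toEuclideanCLM (𝕜 := 𝕜) (1 - A)⁻¹ b) = b := by
    rw [← mul_apply_eq_comp, ← map_mul,
      mul_nonsing_inv _ ((isUnit_iff_isUnit_det _).mp hA), map_one]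
    rfl
  rw [map_sub, map_one, _root_.sub_apply, one_apply_eq_self] at hinv
  generalize toEuclideanCLM (𝕜 := 𝕜) (1 - A)⁻¹ b = x at hinv ⊢
  subst hinv
  show c • (x - _) + _ = _
  rw [map_smul]
  module

end Matrix

theorem stmt13_general {n : ℕ} (S St : Matrix (Fin n) (Fin n) ℝ) (ρ ψ : ℝ)
    (hψ : |ψ| * ‖Matrix.toEuclideanCLM (𝕜 := ℝ) St‖ < 1)
    (y p : EuclideanSpace ℝ (Fin n))
    (hp : p = ρ • y + ψ • (Matrix.toEuclideanCLM (𝕜 := ℝ) S) p)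
    (r : EuclideanSpace ℝ (Fin n))
    (hr : r = ψ • (Matrix.toEuclideanCLM (𝕜 := ℝ) (St - S)) p)
    (pt : ℕ → EuclideanSpace ℝ (Fin n))
    (h0 : pt 0 = p)
    (hrec : ∀ t : ℕ, pt (t + 1) = ρ • y + ψ • (Matrix.toEuclideanCLM (𝕜 := ℝ) St) (pt t)) :
    ∀ t : ℕ, ‖pt t - ρ • (Matrix.toEuclideanCLM (𝕜 := ℝ)
        (((1 : Matrix (Fin n) (Fin n) ℝ) - ψ • St)⁻¹)) y‖ ≤
      (|ψ| * ‖Matrix.toEuclideanCLM (𝕜 := ℝ) St‖) ^ t * ‖r‖ /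
        (1 - |ψ| * ‖Matrix.toEuclideanCLM (𝕜 := ℝ) St‖) := by
  set L := ψ • Matrix.toEuclideanCLM (𝕜 := ℝ) St
  set f := fun v => ρ • y + L v
  have hL : ‖L‖ = |ψ| * ‖Matrix.toEuclideanCLM (𝕜 := ℝ) St‖ := by
    rw [norm_smul, Real.norm_eq_abs]
  have hf : ContractingWith ‖L‖₊ f :=
    ⟨by rwa [← NNReal.coe_lt_coe, coe_nnnorm, hL], L.lipschitzWith_const_add _⟩
  have hpt : ∀ t, pt t = f^[t] p := by
    intro t
    induction t with
    | zero => exact h0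
    | succ t ih => rw [hrec, iterate_succ_apply', ← ih]; rfl
  have hfix : IsFixedPt f (ρ • Matrix.toEuclideanCLM (𝕜 := ℝ) (1 - ψ • St)⁻¹ y) := by
    have hunit : IsUnit (1 - ψ • St) :=
      Matrix.isUnit_one_sub_of_norm_toEuclideanCLM_lt_one (by rwa [map_smul, hL])
    simpa only [map_smul] using Matrix.isFixedPt_smul_toEuclideanCLM_inv_one_sub hunit ρ y
  have hres : dist p (f p) = ‖r‖ := by
    rw [dist_comm, dist_eq_norm, hr]
    nth_rw 2 [hp]
    congr 1
    simp only [f, L, map_sub, sub_apply, smul_apply]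
    module
  intro t
  rw [← dist_eq_norm, hpt, ← hL, ← hres]
  exact hf.dist_iterate_le_of_isFixedPt hfix p t

/-- the warm-restarted iterates `p̃⁽⁰⁾ = p`,
`p̃⁽ᵗ⁾ = ρ·y + ψ·S̃·p̃⁽ᵗ⁻¹⁾`, where `p = ρ·y + ψ·S·p` and
`r = ψ·(S̃ − S)·p`, satisfy
`‖p̃⁽ᵗ⁾ − p*‖ ≤ (|ψ|·‖S̃‖)ᵗ·‖r‖ / (1 − |ψ|·‖S̃‖)` for all `t ≥ 0`, where
`p* = ρ·(I − ψ·S̃)⁻¹·y` is the evolved generalized PageRank vector. -/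
theorem stmt13 {n : ℕ} (S St : Matrix (Fin n) (Fin n) ℝ) (ρ ψ : ℝ)
    (hρ : ρ ≠ 0)
    (hψ : |ψ| * ‖Matrix.toEuclideanCLM (𝕜 := ℝ) St‖ < 1)
    (y p : EuclideanSpace ℝ (Fin n))
    (hp : p = ρ • y + ψ • (Matrix.toEuclideanCLM (𝕜 := ℝ) S) p)
    (r : EuclideanSpace ℝ (Fin n))
    (hr : r = ψ • (Matrix.toEuclideanCLM (𝕜 := ℝ) (St - S)) p)
    (pt : ℕ → EuclideanSpace ℝ (Fin n))
    (h0 : pt 0 = p)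
    (hrec : ∀ t : ℕ, pt (t + 1) = ρ • y + ψ • (Matrix.toEuclideanCLM (𝕜 := ℝ) St) (pt t)) :
    ∀ t : ℕ, ‖pt t - ρ • (Matrix.toEuclideanCLM (𝕜 := ℝ)
        (((1 : Matrix (Fin n) (Fin n) ℝ) - ψ • St)⁻¹)) y‖ ≤
      (|ψ| * ‖Matrix.toEuclideanCLM (𝕜 := ℝ) St‖) ^ t * ‖r‖ /
        (1 - |ψ| * ‖Matrix.toEuclideanCLM (𝕜 := ℝ) St‖) :=
  stmt13_general S St ρ ψ hψ y p hp r hr pt h0 hrec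
end
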